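/- For FI-modules over a commutative ring $k$ (case $m=1$): let $V$ be an FI-module generated by its value $V_n$ on $[n]$, and suppose $H_1(V) = 0$ where $H_1(V) = \mathrm{Tor}_1^{k\mathrm{FI}}(k\mathrm{FI}/\mathfrak{m}, V)$. Then the canonical surjection $M(n) \otimes_{kS_n} V_n \to V$ is an isomorphism, i.e., $V$ is a basic relative projective module. -/

import Mathlib

open CategoryTheory CategoryTheory.Limits TensorProduct

/-- The skeletal category `FI`: objects are natural numbers, morphisms injections. -/
structure FI : Type where
  n : ℕ

instance : Category FI where
  Hom a b := Fin a.n ↪ Fin b.n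
  id a := Function.Embedding.refl _
  comp f g := f.trans g
  id_comp := by intros; rfl
  comp_id := by intros; rfl
  assoc := by intros; rfl

section H0

variable (k : Type) [CommRing k] (l : FI)

/-- The value `(𝔪 V)_l ⊆ V_l`: the submodule generated by the images of all maps
`V_t → V_l` induced by morphisms `t ⟶ l` with `t ≠ l`. -/
def mSub (V : FI ⥤ ModuleCat k) : Submodule k (V.obj l) :=
  ⨆ (t : FI) (_ : t ≠ l) (f : t ⟶ l), LinearMap.range (V.map f).hom

lemma mSub_le {V W : FI ⥤ ModuleCat k} (α : V ⟶ W) :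
    mSub k l V ≤ (mSub k l W).comap (α.app l).hom := by
  refine iSup_le fun t => iSup_le fun ht => iSup_le fun f => ?_
  rintro x ⟨y, rfl⟩
  have h := congrArg (fun (g : V.obj t ⟶ W.obj l) => g y) (α.naturality f)
  try simp only [ConcreteCategory.comp_apply] at h
  have hle : LinearMap.range (W.map f).hom ≤ mSub k l W :=
    le_iSup_of_le t (le_iSup_of_le ht (le_iSup (fun f : t ⟶ l => LinearMap.range (W.map f).hom) f))
  exact hle ⟨α.app t y, h.symm⟩

/-- The functor `V ↦ H_0(V)_l = V_l / (𝔪 V)_l` from `FI`-modules to `k`-modules.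
Its left derived functors compute the `FI`-homology `H_s(V)_l = Tor_s^{kFI}(kFI/𝔪, V)_l`. -/
noncomputable def H0 : (FI ⥤ ModuleCat k) ⥤ ModuleCat k where
  obj V := ModuleCat.of k (V.obj l ⧸ mSub k l V)
  map {V W} α := ModuleCat.ofHom ((mSub k l V).mapQ (mSub k l W) (α.app l).hom (mSub_le k l α))
  map_id := fun V => ModuleCat.hom_ext (Submodule.linearMap_qext _ (by ext x; rfl))
  map_comp := fun α β => ModuleCat.hom_ext (Submodule.linearMap_qext _ (by ext x; rfl))

instance : (H0 k l).Additive where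
  map_add := by
    intro V W α β
    exact ModuleCat.hom_ext (Submodule.linearMap_qext _ (by ext x; rfl))

end H0

section RelProj

/-- The free `k`-module on the set of injections `[n] ↪ [l]`, i.e. `M(n)_l`. -/
def FreeMod (k : Type) [CommRing k] (n l : ℕ) : Type := (Fin n ↪ Fin l) →₀ k

noncomputable instance (k : Type) [CommRing k] (n l : ℕ) : AddCommGroup (FreeMod k n l) :=
  Finsupp.instAddCommGroup

noncomputable instance (k : Type) [CommRing k] (n l : ℕ) : Module k (FreeMod k n l) :=
  Finsupp.module _ _

/-- The basis element of `M(n)_l` corresponding to an injection `g : [n] ↪ [l]`. -/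
noncomputable def bas (k : Type) [CommRing k] (n l : ℕ) (g : Fin n ↪ Fin l) :
    FreeMod k n l :=
  Finsupp.single g (1 : k)

variable (k : Type) [CommRing k] (n : ℕ)
variable (W : Type) [AddCommGroup W] [Module k W]
  [DistribMulAction (Equiv.Perm (Fin n)) W] [SMulCommClass (Equiv.Perm (Fin n)) k W]

/-- The relations defining `M(n) ⊗_{kS_n} W` as a quotient of `M(n)_l ⊗_k W`. -/
def relSet (l : ℕ) : Set ((FreeMod k n l) ⊗[k] W) :=
  {x | ∃ (g : Fin n ↪ Fin l) (σ : Equiv.Perm (Fin n)) (w : W),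
    x = bas k n l (σ.toEmbedding.trans g) ⊗ₜ[k] w - bas k n l g ⊗ₜ[k] (σ • w)}

/-- The value at `[l]` of the basic relative projective `FI`-module `M(n) ⊗_{kS_n} W`. -/
def TT (l : ℕ) : Type :=
  ((FreeMod k n l) ⊗[k] W) ⧸ Submodule.span k (relSet k n W l)

noncomputable instance (l : ℕ) : AddCommGroup (TT k n W l) :=
  Submodule.Quotient.addCommGroup _

noncomputable instance (l : ℕ) : Module k (TT k n W l) :=
  Submodule.Quotient.module _

/-- The class of `g ⊗ w` in `(M(n) ⊗_{kS_n} W)_l`. -/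
noncomputable def cls (l : ℕ) (g : Fin n ↪ Fin l) (w : W) : TT k n W l :=
  Submodule.Quotient.mk (bas k n l g ⊗ₜ[k] w)

/-!
Induction on `l`. At `l = n` the map `Φ_n` has the retraction `w ↦ [id ⊗ w]`, because every
injection `[n] ↪ [n]` is a permutation. For `l ≠ n` the whole of `T_l = (M(n) ⊗_{kS_n} V_n)_l`
lies in `(𝔪T)_l`. Take a projective resolution `P → V` and lift `π : P₀ → V` through `Φ` to
`λ : P₀ → T`. Injectivity of `Φ` below `l` gives `(𝔪T)_l ⊆ λ((𝔪P₀)_l)`, so a kernel element is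
`λ u` with `u ∈ (𝔪P₀)_l` and `π u = 0`. Vanishing of `H₁(V)_l = H₁(P/𝔪P)_l` makes `u = d m`
with `m ∈ (𝔪P₁)_l`, and `λ ∘ d` kills `(𝔪P₁)_l` because it kills `P₁` in lower degrees, again by
injectivity below `l`. This diagram chase replaces the long exact sequence of the kernel.
-/

section RelativeProjective

variable (k : Type) [CommRing k] (n : ℕ)

noncomputable def FreeMod.map {t l : ℕ} (f : Fin t ↪ Fin l) :
    FreeMod k n t →ₗ[k] FreeMod k n l :=
  Finsupp.lmapDomain k k (·.trans f)

lemma FreeMod.map_bas {t l : ℕ} (f : Fin t ↪ Fin l) (g : Fin n ↪ Fin t) :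
    FreeMod.map k n f (bas k n t g) = bas k n l (g.trans f) :=
  Finsupp.mapDomain_single

namespace TT

variable (W : Type) [AddCommGroup W] [Module k W]

noncomputable def tensorMap {t l : ℕ} (f : Fin t ↪ Fin l) :
    (FreeMod k n t ⊗[k] W) →ₗ[k] (FreeMod k n l ⊗[k] W) :=
  (FreeMod.map k n f).rTensor W

lemma tensorMap_bas_tmul {t l : ℕ} (f : Fin t ↪ Fin l) (g : Fin n ↪ Fin t) (w : W) :
    tensorMap k n W f (bas k n t g ⊗ₜ[k] w) = bas k n l (g.trans f) ⊗ₜ[k] w := by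
  rw [tensorMap, LinearMap.rTensor_tmul, FreeMod.map_bas]

variable [DistribMulAction (Equiv.Perm (Fin n)) W]

lemma span_relSet_le_comap {t l : ℕ} (f : Fin t ↪ Fin l) :
    Submodule.span k (relSet k n W t) ≤
      (Submodule.span k (relSet k n W l)).comap (tensorMap k n W f) := by
  rw [Submodule.span_le]
  rintro x ⟨g, σ, w, rfl⟩
  simp only [SetLike.mem_coe, Submodule.mem_comap, map_sub, tensorMap_bas_tmul]
  exact Submodule.subset_span ⟨g.trans f, σ, w, rfl⟩

noncomputable def map {t l : ℕ} (f : Fin t ↪ Fin l) : TT k n W t →ₗ[k] TT k n W l :=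
  Submodule.mapQ _ _ (tensorMap k n W f) (span_relSet_le_comap k n W f)

lemma map_cls {t l : ℕ} (f : Fin t ↪ Fin l) (g : Fin n ↪ Fin t) (w : W) :
    map k n W f (cls k n W t g w) = cls k n W l (g.trans f) w :=
  congrArg Submodule.Quotient.mk (tensorMap_bas_tmul k n W f g w)

lemma cls_perm_trans {l : ℕ} (σ : Equiv.Perm (Fin n)) (g : Fin n ↪ Fin l) (w : W) :
    cls k n W l (σ.toEmbedding.trans g) w = cls k n W l g (σ • w) :=
  (Submodule.Quotient.eq _).2 (Submodule.subset_span ⟨g, σ, w, rfl⟩)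

lemma hom_ext {l : ℕ} {M : Type} [AddCommGroup M] [Module k M] {A B : TT k n W l →ₗ[k] M}
    (h : ∀ (g : Fin n ↪ Fin l) (w : W), A (cls k n W l g w) = B (cls k n W l g w)) : A = B := by
  apply Submodule.linearMap_qext
  apply TensorProduct.ext
  apply Finsupp.lhom_ext'
  intro g
  ext w
  exact h g w

lemma eq_top_of_forall_cls_mem {l : ℕ} {p : Submodule k (TT k n W l)}
    (h : ∀ (g : Fin n ↪ Fin l) (w : W), cls k n W l g w ∈ p) : p = ⊤ := by
  rw [← p.ker_mkQ, LinearMap.ker_eq_top]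
  exact hom_ext k n W fun g w => (Submodule.Quotient.mk_eq_zero p).2 (h g w)

noncomputable def functor : FI ⥤ ModuleCat k where
  obj l := ModuleCat.of k (TT k n W l.n)
  map f := ModuleCat.ofHom (map k n W f)
  map_id _ := ModuleCat.hom_ext (hom_ext k n W fun g w => map_cls k n W _ g w)
  map_comp _ _ := ModuleCat.hom_ext (hom_ext k n W fun g w => by
    simp only [ModuleCat.hom_comp, ModuleCat.hom_ofHom, LinearMap.comp_apply, map_cls]
    rfl)

end TT

end RelativeProjective

lemma FI.n_le_of_hom {t l : FI} (f : t ⟶ l) : t.n ≤ l.n := by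
  simpa using Fintype.card_le_of_embedding f

lemma FI.n_lt_of_hom_of_ne {t l : FI} (f : t ⟶ l) (ht : t ≠ l) : t.n < l.n :=
  (FI.n_le_of_hom f).lt_of_ne fun h => ht (by cases t; cases l; cases h; rfl)

section mSub

variable {k : Type} [CommRing k] {l : FI}

lemma map_mem_mSub (A : FI ⥤ ModuleCat k) {t : FI} (ht : t ≠ l) (f : t ⟶ l) (y : A.obj t) :
    A.map f y ∈ mSub k l A :=
  (le_iSup_of_le t <| le_iSup_of_le ht <|
    le_iSup (fun f : t ⟶ l => LinearMap.range (A.map f).hom) f : _ ≤ mSub k l A) ⟨y, rfl⟩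

lemma mSub_le_iff {A : FI ⥤ ModuleCat k} {p : Submodule k (A.obj l)} :
    mSub k l A ≤ p ↔ ∀ t, t ≠ l → ∀ (f : t ⟶ l) (y : A.obj t), A.map f y ∈ p := by
  refine ⟨fun h t ht f y => h (map_mem_mSub A ht f y), fun h => ?_⟩
  refine iSup_le fun t => iSup_le fun ht => iSup_le fun f => ?_
  rintro _ ⟨y, rfl⟩
  exact h t ht f y

variable {P Q T V : FI ⥤ ModuleCat k} {Φ : T ⟶ V}

lemma mSub_le_map_mSub {π : Q ⟶ V} (hπ : ∀ t, Function.Surjective (π.app t))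
    (lift : Q ⟶ T) (hlift : lift ≫ Φ = π)
    (hinj : ∀ t, t ≠ l → (t ⟶ l) → Function.Injective (Φ.app t)) :
    mSub k l T ≤ (mSub k l Q).map (lift.app l).hom := by
  refine mSub_le_iff.2 fun t ht f y => ?_
  obtain ⟨q, hq⟩ := hπ t (Φ.app t y)
  have hy : lift.app t q = y := hinj t ht f <| by
    rw [← hq, ← hlift]
    rfl
  refine ⟨Q.map f q, map_mem_mSub Q ht f q, ?_⟩
  rw [← hy]
  exact NatTrans.naturality_apply lift f q

lemma mSub_le_ker_of_comp_eq_zero (α : P ⟶ T) (hα : α ≫ Φ = 0)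
    (hinj : ∀ t, t ≠ l → (t ⟶ l) → Function.Injective (Φ.app t)) :
    mSub k l P ≤ LinearMap.ker (α.app l).hom := by
  refine mSub_le_iff.2 fun t ht f y => ?_
  have hy : α.app t y = 0 := hinj t ht f <| by
    rw [map_zero, ← ConcreteCategory.comp_apply, ← NatTrans.comp_app, hα]
    rfl
  change α.app l (P.map f y) = 0
  rw [NatTrans.naturality_apply α f y, hy, map_zero]

end mSub

section Homology

variable {k : Type} [CommRing k] [HasProjectiveResolutions (FI ⥤ ModuleCat k)] {l : FI}

lemma exists_mem_mSub_d_eq_of_isZero_leftDerived_one {V : FI ⥤ ModuleCat k}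
    (P : ProjectiveResolution V) (hH1 : IsZero (((H0 k l).leftDerived 1).obj V))
    {u : (P.complex.X 0).obj l} (hu : u ∈ mSub k l (P.complex.X 0))
    (hπu : (P.π.f 0).app l u = 0) :
    ∃ m ∈ mSub k l (P.complex.X 1), (P.complex.d 1 0).app l m = u := by
  obtain ⟨p, hp⟩ : ∃ p, (P.complex.d 1 0).app l p = u :=
    (ShortComplex.moduleCat_exact_iff _).1 (P.exact₀.map ((evaluation _ _).obj l)) u hπu
  set FP := ((H0 k l).mapHomologicalComplex (ComplexShape.down ℕ)).obj P.complex
  have hexact : (FP.sc' 2 1 0).Exact := by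
    rw [← FP.exactAt_iff' 2 1 0 (by simp) (by simp), FP.exactAt_iff_isZero_homology]
    exact hH1.of_iso (P.isoLeftDerivedObj (H0 k l) 1).symm
  have hcycle : (FP.sc' 2 1 0).g (Submodule.Quotient.mk p) = 0 := by
    change Submodule.Quotient.mk ((P.complex.d 1 0).app l p) = _
    rw [hp]
    exact (Submodule.Quotient.mk_eq_zero _).2 hu
  obtain ⟨y, hy⟩ := (ShortComplex.moduleCat_exact_iff _).1 hexact _ hcycle
  obtain ⟨r, rfl⟩ := Submodule.Quotient.mk_surjective _ y
  refine ⟨p - (P.complex.d 2 1).app l r, (Submodule.Quotient.eq _).1 hy.symm, ?_⟩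
  rw [map_sub, hp, ← ConcreteCategory.comp_apply, ← NatTrans.comp_app, P.complex.d_comp_d]
  simp

variable {T V : FI ⥤ ModuleCat k} {Φ : T ⟶ V}

lemma eq_zero_of_mem_mSub_of_app_eq_zero (hΦ : ∀ t, Function.Surjective (Φ.app t))
    (hH1 : IsZero (((H0 k l).leftDerived 1).obj V))
    (hinj : ∀ t, t ≠ l → (t ⟶ l) → Function.Injective (Φ.app t))
    {x : T.obj l} (hx : x ∈ mSub k l T) (hΦx : Φ.app l x = 0) : x = 0 := by
  let P : ProjectiveResolution V := HasProjectiveResolution.out.some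
  let π : P.complex.X 0 ⟶ V :=
    P.π.f 0 ≫ (HomologicalComplex.singleObjXSelf (ComplexShape.down ℕ) 0 V).hom
  have hπ : ∀ t, Function.Surjective (π.app t) := fun t =>
    (ModuleCat.epi_iff_surjective _).1 inferInstance
  have : ∀ t, Epi (Φ.app t) := fun t => (ModuleCat.epi_iff_surjective _).2 (hΦ t)
  have : Epi Φ := NatTrans.epi_of_epi_app Φ
  let lift : P.complex.X 0 ⟶ T := Projective.factorThru π Φ
  have hlift : lift ≫ Φ = π := Projective.factorThru_comp π Φ
  obtain ⟨u, hu, rfl⟩ := mSub_le_map_mSub hπ lift hlift hinj hx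
  have hπu : π.app l u = 0 := by
    rw [← hlift]
    exact hΦx
  obtain ⟨m, hm, rfl⟩ := exists_mem_mSub_d_eq_of_isZero_leftDerived_one P hH1 hu hπu
  have hdlift : (P.complex.d 1 0 ≫ lift) ≫ Φ = 0 := by
    rw [Category.assoc, hlift, ← Category.assoc, P.complex_d_comp_π_f_zero, zero_comp]
  exact mSub_le_ker_of_comp_eq_zero _ hdlift hinj hm

theorem injective_app_of_isZero_leftDerived_one (n : FI)
    (hΦ : ∀ t, Function.Surjective (Φ.app t))
    (hH1 : ∀ l : FI, IsZero (((H0 k l).leftDerived 1).obj V))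
    (hT : ∀ l, l ≠ n → mSub k l T = ⊤) (hn : Function.Injective (Φ.app n)) (l : FI) :
    Function.Injective (Φ.app l) := by
  induction h : l.n using Nat.strong_induction_on generalizing l with
  | _ N ih =>
    by_cases hl : l = n
    · exact hl ▸ hn
    refine (injective_iff_map_eq_zero _).2 fun x hx =>
      eq_zero_of_mem_mSub_of_app_eq_zero hΦ (hH1 l) (fun t ht f => ?_) (hT l hl ▸ Submodule.mem_top) hx
    exact ih t.n (h ▸ FI.n_lt_of_hom_of_ne f ht) t rfl

end Homology

namespace TT

lemma mSub_functor_eq_top (k : Type) [CommRing k] (n : ℕ) (W : Type) [AddCommGroup W]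
    [Module k W] [DistribMulAction (Equiv.Perm (Fin n)) W] {l : FI} (hl : l ≠ ⟨n⟩) :
    mSub k l (functor k n W) = ⊤ :=
  eq_top_of_forall_cls_mem k n W fun g w => by
    have h := map_mem_mSub (functor k n W) hl.symm (show (⟨n⟩ : FI) ⟶ l from g)
      (cls k n W n (Function.Embedding.refl _) w)
    change map k n W g _ ∈ _ at h
    rwa [map_cls] at h

variable {k : Type} [CommRing k] {V : FI ⥤ ModuleCat k} {n : FI}
  [DistribMulAction (Equiv.Perm (Fin n.n)) (V.obj n)]
  {Φ : ∀ l : FI, TT k n.n (V.obj n) l.n →ₗ[k] V.obj l}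

noncomputable def natTrans
    (hΦ : ∀ (l : FI) (g : Fin n.n ↪ Fin l.n) (w : V.obj n),
      Φ l (cls k n.n (V.obj n) l.n g w) = V.map (show n ⟶ l from g) w) :
    functor k n.n (V.obj n) ⟶ V where
  app l := ModuleCat.ofHom (Φ l)
  naturality t l f := ModuleCat.hom_ext <| hom_ext k n.n (V.obj n) fun g w => by
    change Φ l (map k n.n (V.obj n) f (cls k n.n (V.obj n) t.n g w)) =
      V.map f (Φ t (cls k n.n (V.obj n) t.n g w))
    rw [map_cls, hΦ, hΦ, ← ConcreteCategory.comp_apply, ← V.map_comp]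
    rfl

lemma leftInverse_cls_refl
    (hact : ∀ (σ : Equiv.Perm (Fin n.n)) (v : V.obj n),
      σ • v = V.map (show n ⟶ n from σ.toEmbedding) v)
    (hΦ : ∀ (l : FI) (g : Fin n.n ↪ Fin l.n) (w : V.obj n),
      Φ l (cls k n.n (V.obj n) l.n g w) = V.map (show n ⟶ l from g) w) :
    Function.LeftInverse (cls k n.n (V.obj n) n.n (Function.Embedding.refl _)) (Φ n) := by
  let clsRefl : V.obj n →ₗ[k] TT k n.n (V.obj n) n.n :=
    (Submodule.mkQ _).comp (TensorProduct.mk k _ _ (bas k n.n n.n (Function.Embedding.refl _)))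
  have key : clsRefl ∘ₗ Φ n = LinearMap.id := hom_ext k n.n (V.obj n) fun g w => by
    let σ : Equiv.Perm (Fin n.n) :=
      Equiv.ofBijective g (Finite.injective_iff_bijective.1 g.injective)
    change cls k n.n (V.obj n) n.n _ (Φ n (cls k n.n (V.obj n) n.n σ.toEmbedding w)) = _
    rw [hΦ, ← hact, ← cls_perm_trans]
    rfl
  exact LinearMap.congr_fun key

end TT

theorem stmt18_general (k : Type) [CommRing k]
    [HasProjectiveResolutions (FI ⥤ ModuleCat k)]
    (V : FI ⥤ ModuleCat k) (n : FI)
    [DistribMulAction (Equiv.Perm (Fin n.n)) (V.obj n)]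
    (hact : ∀ (σ : Equiv.Perm (Fin n.n)) (v : V.obj n),
      σ • v = V.map (show n ⟶ n from σ.toEmbedding) v)
    (Φ : ∀ l : FI, TT k n.n (V.obj n) l.n →ₗ[k] V.obj l)
    (hΦ : ∀ (l : FI) (g : Fin n.n ↪ Fin l.n) (w : V.obj n),
      Φ l (cls k n.n (V.obj n) l.n g w) = V.map (show n ⟶ l from g) w)
    (hgen : ∀ l : FI, Function.Surjective (Φ l))
    (hH1 : ∀ l : FI, IsZero (((H0 k l).leftDerived 1).obj V)) :
    ∀ l : FI, Function.Bijective (Φ l) := fun l =>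
  ⟨injective_app_of_isZero_leftDerived_one (Φ := TT.natTrans hΦ) n hgen hH1
    (fun _ hl => TT.mSub_functor_eq_top k n.n (V.obj n) hl)
    (TT.leftInverse_cls_refl hact hΦ).injective l, hgen l⟩

/-- (Case `m = 1`, i.e. `FI`-modules over a commutative ring `k`.)  Let `V` be an
`FI`-module generated by its value `V_n` (the canonical map `M(n) ⊗_{kS_n} V_n → V`
is surjective), and suppose `H_1(V) = 0`, where `H_s(V) = Tor_s^{kFI}(kFI/𝔪, V)` is
computed by the left derived functors of `V ↦ V/𝔪V`.  Then the canonical surjection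
`M(n) ⊗_{kS_n} V_n → V` is an isomorphism, i.e. `V` is a basic relative projective
module.  Here the `S_n`-action on `V_n` is the canonical one (`σ • v = σ · v`), and
the canonical map is encoded objectwise by the maps `Φ_l`, `g ⊗ w ↦ g · w`. -/
theorem stmt18 (k : Type) [CommRing k]
    [HasProjectiveResolutions (FI ⥤ ModuleCat k)]
    (V : FI ⥤ ModuleCat k) (n : FI)
    [DistribMulAction (Equiv.Perm (Fin n.n)) (V.obj n)]
    [SMulCommClass (Equiv.Perm (Fin n.n)) k (V.obj n)]
    (hact : ∀ (σ : Equiv.Perm (Fin n.n)) (v : V.obj n),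
      σ • v = V.map (show n ⟶ n from σ.toEmbedding) v)
    (Φ : ∀ l : FI, TT k n.n (V.obj n) l.n →ₗ[k] V.obj l)
    (hΦ : ∀ (l : FI) (g : Fin n.n ↪ Fin l.n) (w : V.obj n),
      Φ l (cls k n.n (V.obj n) l.n g w) = V.map (show n ⟶ l from g) w)
    (hgen : ∀ l : FI, Function.Surjective (Φ l))
    (hH1 : ∀ l : FI, IsZero (((H0 k l).leftDerived 1).obj V)) :
    ∀ l : FI, Function.Bijective (Φ l) :=
  stmt18_general k V n hact Φ hΦ hgen hH1
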